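/- arXiv:1605.09561 — 3 statements merged into one kernel-verified Lean document; each statement's English description precedes it below -/
import Mathlib

section
/- If h is a harmonic homogeneous polynomial of degree n on ℝ³ and q(x,y,z)=x²+y²+z², then for every k ≥ 1, Δᵏ(qᵏ h) = λ_k(n) h, where λ_k(n) = (2(n+k)+1)!·k!·n! / ((2n+1)!·(n+k)!). -/
open scoped BigOperators

/-- The Laplacian on polynomials in three variables. -/
noncomputable def polyLaplacian (p : MvPolynomial (Fin 3) ℝ) : MvPolynomial (Fin 3) ℝ :=
  ∑ i : Fin 3, MvPolynomial.pderiv i (MvPolynomial.pderiv i p)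

/-- The quadratic form `q(x,y,z) = x² + y² + z²` as a polynomial. -/
noncomputable def qPoly : MvPolynomial (Fin 3) ℝ :=
  MvPolynomial.X 0 ^ 2 + MvPolynomial.X 1 ^ 2 + MvPolynomial.X 2 ^ 2

namespace LapAux

open MvPolynomial

private lemma euler_monomial (s : Fin 3 →₀ ℕ) (a : ℝ) :
    ∑ i : Fin 3, X i * pderiv i (monomial s a) = (∑ i : Fin 3, s i) • monomial s a := by
  have key : ∀ i : Fin 3, X i * pderiv i (monomial s a) = (s i) • monomial s a := by
    intro i
    rw [pderiv_monomial]
    rcases Nat.eq_zero_or_pos (s i) with h0 | hpos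
    · simp [h0]
    · have hs : (s - Finsupp.single i 1) + Finsupp.single i 1 = s := by
        ext j
        by_cases hj : j = i
        · subst hj; simp [Nat.sub_add_cancel hpos]
        · simp [Finsupp.single_apply, Ne.symm hj, hj]
      rw [X, monomial_mul, smul_monomial, add_comm, hs, mul_comm, nsmul_eq_mul]
      ring
  simp_rw [key]
  rw [← Finset.sum_smul]

private lemma euler {n : ℕ} {h : MvPolynomial (Fin 3) ℝ} (hh : h.IsHomogeneous n) :
    ∑ i : Fin 3, X i * pderiv i h = (n : ℝ) • h := by
  calc ∑ i : Fin 3, X i * pderiv i h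
      = ∑ i : Fin 3, ∑ s ∈ h.support, X i * pderiv i (monomial s (coeff s h)) := by
        conv_lhs => rw [h.as_sum]
        simp_rw [map_sum, Finset.mul_sum]
    _ = ∑ s ∈ h.support, ∑ i : Fin 3, X i * pderiv i (monomial s (coeff s h)) :=
        Finset.sum_comm
    _ = ∑ s ∈ h.support, (n : ℝ) • monomial s (coeff s h) := by
        refine Finset.sum_congr rfl fun s hs => ?_
        rw [euler_monomial]
        have hdeg : (∑ i : Fin 3, s i) = n := by
          have hw := hh (mem_support_iff.mp hs)
          rw [← hw, Finsupp.weight_apply, Finsupp.sum_fintype] <;> simp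
        rw [hdeg, ← Nat.cast_smul_eq_nsmul ℝ]
    _ = (n : ℝ) • h := by rw [← Finset.smul_sum, ← h.as_sum]

private lemma lap_smul (r : ℝ) (p : MvPolynomial (Fin 3) ℝ) :
    polyLaplacian (r • p) = r • polyLaplacian p := by
  simp [polyLaplacian, Finset.smul_sum]

private lemma lap_iter_smul (k : ℕ) (r : ℝ) (p : MvPolynomial (Fin 3) ℝ) :
    polyLaplacian^[k] (r • p) = r • polyLaplacian^[k] p := by
  induction k generalizing p with
  | zero => simp
  | succ k ih => rw [Function.iterate_succ_apply, Function.iterate_succ_apply, lap_smul, ih]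

private lemma pderiv_qPoly (i : Fin 3) : pderiv i qPoly = C 2 * X i := by
  have : (C 2 : MvPolynomial (Fin 3) ℝ) = 2 := by simp [map_ofNat]
  rw [this]
  fin_cases i <;>
    simp [qPoly, pow_two, pderiv_mul, pderiv_X, Finsupp.single_apply] <;> ring

private lemma step (p : MvPolynomial (Fin 3) ℝ) (i : Fin 3) :
    pderiv i (pderiv i (qPoly * p)) =
      C (2:ℝ) * p + C 4 * (X i * pderiv i p) + qPoly * pderiv i (pderiv i p) := by
  have c2 : (C 2 : MvPolynomial (Fin 3) ℝ) = 2 := by simp [map_ofNat]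
  have c4 : (C 4 : MvPolynomial (Fin 3) ℝ) = 4 := by simp [map_ofNat]
  rw [pderiv_mul, pderiv_qPoly, map_add, pderiv_mul, pderiv_mul, pderiv_mul, pderiv_qPoly,
    pderiv_C, pderiv_X_self, c2, c4]
  ring

private lemma lap_q_mul_homog {d : ℕ} {p : MvPolynomial (Fin 3) ℝ}
    (hp : p.IsHomogeneous d) :
    polyLaplacian (qPoly * p) = ((4 * (d:ℝ) + 6)) • p + qPoly * polyLaplacian p := by
  have e := euler hp
  show ∑ i : Fin 3, pderiv i (pderiv i (qPoly * p)) = _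
  simp_rw [step]
  rw [Finset.sum_add_distrib, Finset.sum_add_distrib, Finset.sum_const, Finset.card_univ,
    Fintype.card_fin, ← Finset.mul_sum, e, ← Finset.mul_sum]
  have hfold : qPoly * ∑ i : Fin 3, pderiv i (pderiv i p) = qPoly * polyLaplacian p := rfl
  rw [hfold]
  simp only [smul_eq_C_mul, nsmul_eq_mul, map_add, map_mul, map_ofNat, Nat.cast_ofNat]
  ring

private lemma q_homog : qPoly.IsHomogeneous 2 := by
  have h0 := (MvPolynomial.isHomogeneous_X ℝ (0 : Fin 3)).pow 2
  have h1 := (MvPolynomial.isHomogeneous_X ℝ (1 : Fin 3)).pow 2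
  have h2 := (MvPolynomial.isHomogeneous_X ℝ (2 : Fin 3)).pow 2
  simpa [qPoly] using (h0.add h1).add h2

private lemma lap_q_pow (n : ℕ) (h : MvPolynomial (Fin 3) ℝ)
    (hhom : h.IsHomogeneous n) (hharm : polyLaplacian h = 0) : ∀ k : ℕ,
    polyLaplacian (qPoly ^ (k+1) * h) =
      ((2 * ((k:ℝ)+1) * (2*n + 2*((k:ℝ)+1) + 1))) • (qPoly ^ k * h) := by
  intro k
  induction k with
  | zero =>
    rw [pow_one, lap_q_mul_homog hhom, hharm, mul_zero, add_zero, pow_zero, one_mul]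
    congr 1
    push_cast
    ring
  | succ k ih =>
    have hhomk : (qPoly ^ (k+1) * h).IsHomogeneous (2*(k+1) + n) :=
      (q_homog.pow (k+1)).mul hhom
    rw [show qPoly ^ (k+2) * h = qPoly * (qPoly ^ (k+1) * h) by ring,
      lap_q_mul_homog hhomk, ih, mul_smul_comm,
      show qPoly * (qPoly ^ k * h) = qPoly ^ (k+1) * h by ring,
      ← add_smul]
    congr 1
    push_cast
    ring

private lemma main_iter (n : ℕ) (h : MvPolynomial (Fin 3) ℝ)
    (hhom : h.IsHomogeneous n) (hharm : polyLaplacian h = 0) (k : ℕ) :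
    polyLaplacian^[k] (qPoly ^ k * h) =
      (∏ m ∈ Finset.range k, (2 * ((m:ℝ)+1) * (2*n + 2*((m:ℝ)+1) + 1))) • h := by
  induction k with
  | zero => simp
  | succ k ih =>
    rw [Function.iterate_succ_apply, lap_q_pow n h hhom hharm k, lap_iter_smul, ih,
      smul_smul, Finset.prod_range_succ]
    congr 1
    ring

private lemma arith (n : ℕ) : ∀ k : ℕ,
    (∏ m ∈ Finset.range k, (2 * ((m:ℝ)+1) * (2*n + 2*((m:ℝ)+1) + 1))) =
      (((2 * (n + k) + 1).factorial * k.factorial * n.factorial : ℝ) /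
        ((2 * n + 1).factorial * (n + k).factorial)) := by
  intro k
  induction k with
  | zero =>
    simp
    rw [div_self (by positivity)]
  | succ k ih =>
    rw [Finset.prod_range_succ, ih]
    have hB : (2 * (n + (k+1)) + 1).factorial =
        (2*(n+k)+3) * ((2*(n+k)+2) * (2 * (n + k) + 1).factorial) := by
      have e : 2 * (n + (k+1)) + 1 = (2*(n+k)+1) + 1 + 1 := by ring
      rw [e, Nat.factorial_succ, Nat.factorial_succ]
    have hK : (k+1).factorial = (k+1) * k.factorial := Nat.factorial_succ k
    have hN : (n + (k+1)).factorial = (n+k+1) * (n+k).factorial := by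
      have e : n + (k+1) = (n+k) + 1 := by ring
      rw [e, Nat.factorial_succ]
    rw [hB, hK, hN]
    have d1 : ((2*n+1).factorial : ℝ) ≠ 0 :=
      Nat.cast_ne_zero.mpr (Nat.factorial_ne_zero _)
    have d2 : ((n+k).factorial : ℝ) ≠ 0 :=
      Nat.cast_ne_zero.mpr (Nat.factorial_ne_zero _)
    have d3 : ((n:ℝ)+k+1) ≠ 0 := by positivity
    push_cast
    field_simp
    ring

end LapAux

/-- If `h` is a harmonic homogeneous polynomial of degree `n` on `ℝ³` and
`q(x,y,z) = x² + y² + z²`, then for every `k ≥ 1`,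
`Δᵏ(qᵏ h) = λ_k(n) h` with `λ_k(n) = (2(n+k)+1)!·k!·n! / ((2n+1)!·(n+k)!)`. -/
theorem laplacian_pow_q_pow_mul (n : ℕ) (h : MvPolynomial (Fin 3) ℝ)
    (hhom : h.IsHomogeneous n) (hharm : polyLaplacian h = 0) (k : ℕ) (hk : 1 ≤ k) :
    polyLaplacian^[k] (qPoly ^ k * h) =
      (((2 * (n + k) + 1).factorial * k.factorial * n.factorial : ℝ) /
        ((2 * n + 1).factorial * (n + k).factorial)) • h := by
  rw [LapAux.main_iter n h hhom hharm k, LapAux.arith n k]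
end

section
/- In the harmonic decomposition p = Σ_{k=0}^{r} qᵏ h_k of a homogeneous polynomial p of degree n on ℝ³, the top harmonic component is h_r = (1/(2r+1)!)·Δʳp if n = 2r is even, and h_r = (3!(r+1)/(2r+3)!)·Δʳp if n = 2r+1 is odd. -/
open scoped BigOperators

/-!
For a harmonic polynomial `g` homogeneous of degree `d`, the Leibniz rule for `Δ`
and Euler's identity `∑ xᵢ ∂ᵢg = d g` give `Δ(q^(k+1) g) = 2(k+1)(2d+2k+3) q^k g`. Hence
`Δʳ` kills `q^k h_k` for `k < r` and sends `q^r h_r` to `∏_{j<r} 2(j+1)(2d+2j+3) · h_r`,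
a product equal to `(2r+1)!` for `d = 0` and to `(2r+3)!/(6(r+1))` for `d = 1`.
-/

open MvPolynomial

noncomputable section

def polyLaplacianₗ : Module.End ℝ (MvPolynomial (Fin 3) ℝ) :=
  ∑ i : Fin 3, (pderiv i).toLinearMap ∘ₗ (pderiv i).toLinearMap

theorem coe_polyLaplacianₗ : ⇑polyLaplacianₗ = polyLaplacian := by
  ext1 p
  simp [polyLaplacianₗ, polyLaplacian, LinearMap.sum_apply]

theorem iterate_polyLaplacian_eq_pow (m : ℕ) : polyLaplacian^[m] = ⇑(polyLaplacianₗ ^ m) := by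
  rw [Module.End.coe_pow, coe_polyLaplacianₗ]

theorem iterate_polyLaplacian_nsmul (m c : ℕ) (x : MvPolynomial (Fin 3) ℝ) :
    polyLaplacian^[m] (c • x) = c • polyLaplacian^[m] x := by
  rw [iterate_polyLaplacian_eq_pow]
  exact map_nsmul _ c x

theorem iterate_polyLaplacian_zero (m : ℕ) : polyLaplacian^[m] 0 = 0 := by
  rw [iterate_polyLaplacian_eq_pow]
  exact map_zero _

theorem iterate_polyLaplacian_sum {ι : Type*} (m : ℕ) (s : Finset ι)
    (f : ι → MvPolynomial (Fin 3) ℝ) :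
    polyLaplacian^[m] (∑ i ∈ s, f i) = ∑ i ∈ s, polyLaplacian^[m] (f i) := by
  rw [iterate_polyLaplacian_eq_pow]
  exact map_sum _ f s

theorem polyLaplacian_mul (f g : MvPolynomial (Fin 3) ℝ) :
    polyLaplacian (f * g) = polyLaplacian f * g
      + 2 * ∑ i : Fin 3, pderiv i f * pderiv i g + f * polyLaplacian g := by
  have second_derivative (i : Fin 3) : pderiv i (pderiv i (f * g)) =
      pderiv i (pderiv i f) * g + 2 * (pderiv i f * pderiv i g)
        + f * pderiv i (pderiv i g) := by
    simp only [Derivation.leibniz, map_add, smul_eq_mul]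
    ring
  simp only [polyLaplacian, second_derivative, Finset.sum_add_distrib, ← Finset.sum_mul,
    ← Finset.mul_sum]

theorem pderiv_qPoly (i : Fin 3) : pderiv i qPoly = 2 • X i := by
  fin_cases i <;> simp [qPoly, pderiv_X]

theorem polyLaplacian_qPoly : polyLaplacian qPoly = 6 := by
  simp only [polyLaplacian, pderiv_qPoly, map_nsmul, pderiv_X_self, Fin.sum_univ_three]
  norm_num

theorem isHomogeneous_qPoly : qPoly.IsHomogeneous 2 :=
  (((isHomogeneous_X ℝ 0).pow 2).add ((isHomogeneous_X ℝ 1).pow 2)).add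
    ((isHomogeneous_X ℝ 2).pow 2)

theorem polyLaplacian_qPoly_mul {d : ℕ} {g : MvPolynomial (Fin 3) ℝ}
    (hg : g.IsHomogeneous d) :
    polyLaplacian (qPoly * g) = (4 * d + 6) • g + qPoly * polyLaplacian g := by
  rw [polyLaplacian_mul, polyLaplacian_qPoly]
  simp_rw [pderiv_qPoly, smul_mul_assoc]
  rw [← Finset.smul_sum, hg.sum_X_mul_pderiv]
  simp only [nsmul_eq_mul]
  push_cast
  ring

theorem polyLaplacian_qPoly_pow_succ_mul {d : ℕ} {g : MvPolynomial (Fin 3) ℝ}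
    (hg : g.IsHomogeneous d) (hΔg : polyLaplacian g = 0) (k : ℕ) :
    polyLaplacian (qPoly ^ (k + 1) * g) =
      (2 * (k + 1) * (2 * d + 2 * k + 3)) • (qPoly ^ k * g) := by
  induction k with
  | zero =>
    rw [zero_add, pow_one, pow_zero, one_mul, polyLaplacian_qPoly_mul hg, hΔg, mul_zero, add_zero]
    congr 1
    ring
  | succ k ih =>
    have hqg : (qPoly ^ (k + 1) * g).IsHomogeneous (2 * (k + 1) + d) :=
      (isHomogeneous_qPoly.pow (k + 1)).mul hg
    rw [pow_succ', mul_assoc, polyLaplacian_qPoly_mul hqg, ih]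
    simp only [nsmul_eq_mul]
    push_cast
    ring

def harmonicFactor (d k : ℕ) : ℕ :=
  ∏ j ∈ Finset.range k, 2 * (j + 1) * (2 * d + 2 * j + 3)

theorem harmonicFactor_succ (d k : ℕ) :
    harmonicFactor d (k + 1) = harmonicFactor d k * (2 * (k + 1) * (2 * d + 2 * k + 3)) :=
  Finset.prod_range_succ _ _

theorem iterate_polyLaplacian_qPoly_pow_mul {d : ℕ} {g : MvPolynomial (Fin 3) ℝ}
    (hg : g.IsHomogeneous d) (hΔg : polyLaplacian g = 0) (k : ℕ) :
    polyLaplacian^[k] (qPoly ^ k * g) = harmonicFactor d k • g := by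
  induction k with
  | zero => simp [harmonicFactor]
  | succ k ih =>
    rw [Function.iterate_succ_apply, polyLaplacian_qPoly_pow_succ_mul hg hΔg,
      iterate_polyLaplacian_nsmul, ih, smul_smul, harmonicFactor_succ, mul_comm]

theorem iterate_polyLaplacian_qPoly_pow_mul_of_lt {d : ℕ} {g : MvPolynomial (Fin 3) ℝ}
    (hg : g.IsHomogeneous d) (hΔg : polyLaplacian g = 0) {k m : ℕ} (hkm : k < m) :
    polyLaplacian^[m] (qPoly ^ k * g) = 0 := by
  obtain ⟨t, rfl⟩ := Nat.exists_eq_add_of_lt hkm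
  rw [show k + t + 1 = t + 1 + k by omega, Function.iterate_add_apply,
    iterate_polyLaplacian_qPoly_pow_mul hg hΔg, iterate_polyLaplacian_nsmul,
    Function.iterate_succ_apply, hΔg, iterate_polyLaplacian_zero, smul_zero]

theorem iterate_polyLaplacian_sum_qPoly_pow_mul {m : ℕ} {d : Fin (m + 1) → ℕ}
    {h : Fin (m + 1) → MvPolynomial (Fin 3) ℝ}
    (hh : ∀ k, (h k).IsHomogeneous (d k) ∧ polyLaplacian (h k) = 0) :
    polyLaplacian^[m] (∑ k : Fin (m + 1), qPoly ^ (k : ℕ) * h k) =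
      harmonicFactor (d (Fin.last m)) m • h (Fin.last m) := by
  rw [iterate_polyLaplacian_sum, Fin.sum_univ_castSucc]
  have lower_terms_vanish (k : Fin m) :
      polyLaplacian^[m] (qPoly ^ (k : ℕ) * h k.castSucc) = 0 :=
    iterate_polyLaplacian_qPoly_pow_mul_of_lt (hh _).1 (hh _).2 k.isLt
  simp only [Fin.val_castSucc, lower_terms_vanish, Finset.sum_const_zero, zero_add, Fin.val_last]
  exact iterate_polyLaplacian_qPoly_pow_mul (hh _).1 (hh _).2 m

theorem harmonicFactor_zero (r : ℕ) : harmonicFactor 0 r = (2 * r + 1).factorial := by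
  induction r with
  | zero => rfl
  | succ r ih =>
    rw [harmonicFactor_succ, ih, show 2 * (r + 1) + 1 = 2 * r + 1 + 1 + 1 by ring,
      Nat.factorial_succ (2 * r + 1 + 1), Nat.factorial_succ (2 * r + 1)]
    ring

theorem six_mul_succ_mul_harmonicFactor_one (r : ℕ) :
    6 * (r + 1) * harmonicFactor 1 r = (2 * r + 3).factorial := by
  induction r with
  | zero => rfl
  | succ r ih =>
    rw [show 2 * (r + 1) + 3 = 2 * r + 3 + 1 + 1 by ring, Nat.factorial_succ (2 * r + 3 + 1),
      Nat.factorial_succ (2 * r + 3), ← ih, harmonicFactor_succ]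
    ring

theorem eq_smul_of_eq_nsmul {R M : Type*} [Semiring R] [AddCommMonoid M] [Module R M] {c : ℕ}
    {a : R} (hac : a * c = 1) {x y : M} (h : y = c • x) : x = a • y := by
  rw [h, ← Nat.cast_smul_eq_nsmul R, smul_smul, hac, one_smul]

end

theorem harmonic_decomposition_top_component_general (n : ℕ) (p : MvPolynomial (Fin 3) ℝ)
    (h : Fin (n / 2 + 1) → MvPolynomial (Fin 3) ℝ)
    (hh : ∀ k : Fin (n / 2 + 1),
      (h k).IsHomogeneous (n - 2 * (k : ℕ)) ∧ polyLaplacian (h k) = 0)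
    (hdec : p = ∑ k : Fin (n / 2 + 1), qPoly ^ (k : ℕ) * h k) :
    (∀ r : ℕ, n = 2 * r →
      h (Fin.last (n / 2)) =
        ((1 : ℝ) / (2 * r + 1).factorial) • polyLaplacian^[r] p) ∧
    (∀ r : ℕ, n = 2 * r + 1 →
      h (Fin.last (n / 2)) =
        ((6 * (r + 1) : ℝ) / (2 * r + 3).factorial) • polyLaplacian^[r] p) := by
  have top := iterate_polyLaplacian_sum_qPoly_pow_mul (d := fun k ↦ n - 2 * k) hh
  simp only [← hdec, Fin.val_last] at top
  constructor
  · intro r hr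
    obtain rfl : r = n / 2 := by omega
    rw [show n - 2 * (n / 2) = 0 by omega, harmonicFactor_zero] at top
    refine eq_smul_of_eq_nsmul ?_ top
    field_simp
  · intro r hr
    obtain rfl : r = n / 2 := by omega
    rw [show n - 2 * (n / 2) = 1 by omega] at top
    refine eq_smul_of_eq_nsmul ?_ top
    have hc : harmonicFactor 1 (n / 2) ≠ 0 :=
      right_ne_zero_of_mul (six_mul_succ_mul_harmonicFactor_one _ ▸ Nat.factorial_ne_zero _)
    rw [← six_mul_succ_mul_harmonicFactor_one]
    push_cast
    field_simp

/-- In the harmonic decomposition `p = Σ qᵏ h_k` of a homogeneous polynomial of degree `n`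
on `ℝ³`, the top harmonic component is `h_r = (1/(2r+1)!)·Δʳp` if `n = 2r`, and
`h_r = (3!(r+1)/(2r+3)!)·Δʳp` if `n = 2r+1`. -/
theorem harmonic_decomposition_top_component (n : ℕ) (p : MvPolynomial (Fin 3) ℝ)
    (hp : p.IsHomogeneous n) (h : Fin (n / 2 + 1) → MvPolynomial (Fin 3) ℝ)
    (hh : ∀ k : Fin (n / 2 + 1),
      (h k).IsHomogeneous (n - 2 * (k : ℕ)) ∧ polyLaplacian (h k) = 0)
    (hdec : p = ∑ k : Fin (n / 2 + 1), qPoly ^ (k : ℕ) * h k) :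
    (∀ r : ℕ, n = 2 * r →
      h (Fin.last (n / 2)) =
        ((1 : ℝ) / (2 * r + 1).factorial) • polyLaplacian^[r] p) ∧
    (∀ r : ℕ, n = 2 * r + 1 →
      h (Fin.last (n / 2)) =
        ((6 * (r + 1) : ℝ) / (2 * r + 3).factorial) • polyLaplacian^[r] p) :=
  harmonic_decomposition_top_component_general n p h hh hdec
end

section
/- The pullback map φ* : H_n(ℂ³) → S_{2n}, defined by (φ*h)(u,v) = h((u²−v²)/2, (u²+v²)/(2i), uv), is a ℂ-linear isomorphism from the space of complex harmonic homogeneous polynomials of degree n in three variables onto the space of binary forms of degree 2n. -/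
open Complex MvPolynomial

/-- The Laplacian `Δ = ∂²_x + ∂²_y + ∂²_z` as a linear map on complex polynomials in
three variables. -/
noncomputable def lapL : MvPolynomial (Fin 3) ℂ →ₗ[ℂ] MvPolynomial (Fin 3) ℂ :=
  ∑ i : Fin 3, ((pderiv i).toLinearMap ∘ₗ (pderiv i).toLinearMap)

/-- The space `H_n(ℂ³)` of complex harmonic homogeneous polynomials of degree `n` in three
variables. -/
noncomputable def harmonicPolySpace (n : ℕ) : Submodule ℂ (MvPolynomial (Fin 3) ℂ) :=
  MvPolynomial.homogeneousSubmodule (Fin 3) ℂ n ⊓ LinearMap.ker lapL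

/-- The Cartan map in coordinates, `φ(u,v) = ((u²−v²)/2, (u²+v²)/(2i), uv)`. -/
noncomputable def cartanMapVec (ξ : Fin 2 → ℂ) : Fin 3 → ℂ :=
  ![(ξ 0 ^ 2 - ξ 1 ^ 2) / 2, (ξ 0 ^ 2 + ξ 1 ^ 2) / (2 * I), ξ 0 * ξ 1]

/-!
Let `q = x² + y² + z²`. The pullback kills `q`, and its kernel is exactly `(q)`: dividing by `q`
as a monic quadratic in `x` leaves `x a(y, z) + b(y, z)`; swapping `u` and `v` flips the sign of
`x ∘ φ` and fixes `(y, z) ∘ φ`, which covers `ℂ²`, so `a = b = 0`.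

For `w` homogeneous of degree `d`,
`Δ (q ^ (k + 1) w) = q ^ (k + 1) Δ w + 2 (k + 1) (2 d + 2 k + 3) q ^ k w`.
By descent on `d`, no nonzero harmonic form is divisible by `q` (injectivity). By induction on the
degree, `w ↦ Δ (q ^ (k + 1) w)` maps the forms of degree `m` onto `q ^ k` times them; applied to
`Δ p` this splits every form `p` of degree `n` as harmonic plus a multiple of `q`. As `x + iy`,
`iy - x`, `z` pull back to `u²`, `v²`, `uv`, every binary form of degree `2n` is the pullback of a
form of degree `n`, hence of a harmonic one (surjectivity).
-/

lemma MvPolynomial.homogeneousComponent_mul_of_isHomogeneous_left {σ R : Type*} [CommSemiring R]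
    {φ ψ : MvPolynomial σ R} {i : ℕ} (hφ : φ.IsHomogeneous i) (n : ℕ) :
    homogeneousComponent n (φ * ψ) =
      if i ≤ n then φ * homogeneousComponent (n - i) ψ else 0 := by
  let _ := MvPolynomial.gradedAlgebra (σ := σ) (R := R)
  simp only [← decomposition.decompose'_apply]
  exact DirectSum.coe_decompose_mul_of_left_mem (𝒜 := homogeneousSubmodule σ R) n hφ

lemma MvPolynomial.IsHomogeneous.exists_isHomogeneous_mul_eq {σ R : Type*} [CommSemiring R]
    {φ ψ : MvPolynomial σ R} {i n : ℕ} (hφ : φ.IsHomogeneous i)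
    (h : (φ * ψ).IsHomogeneous n) :
    ∃ g : MvPolynomial σ R, g.IsHomogeneous (n - i) ∧ φ * ψ = φ * g := by
  rw [← homogeneousComponent_eq_self h, homogeneousComponent_mul_of_isHomogeneous_left hφ]
  split_ifs
  · exact ⟨_, homogeneousComponent_isHomogeneous _ _, rfl⟩
  · exact ⟨0, isHomogeneous_zero _ _ _, (mul_zero φ).symm⟩

lemma MvPolynomial.finSuccEquiv_rename_succ {R : Type*} [CommRing R] {N : ℕ}
    (a : MvPolynomial (Fin N) R) : finSuccEquiv R N (rename Fin.succ a) = Polynomial.C a := by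
  rw [finSuccEquiv_apply, coe_eval₂Hom, eval₂_rename]
  exact (eval₂_comp_left Polynomial.C C X a).symm.trans (congrArg _ (eval₂_eta a))

lemma MvPolynomial.exists_eq_X_zero_sq_add_mul_add {R : Type*} [CommRing R] {N : ℕ}
    (c : MvPolynomial (Fin N) R) (p : MvPolynomial (Fin (N + 1)) R) :
    ∃ g a b,
      p = (X 0 ^ 2 + rename Fin.succ c) * g + X 0 * rename Fin.succ a + rename Fin.succ b := by
  nontriviality R
  set ε := finSuccEquiv R N
  set Q : Polynomial (MvPolynomial (Fin N) R) := .X ^ 2 + .C c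
  have hQ : Q.Monic := Polynomial.monic_X_pow_add_C c two_ne_zero
  have hr : (ε p %ₘ Q).natDegree ≤ 1 := by
    have hQdeg : Q.natDegree = 2 := Polynomial.natDegree_X_pow_add_C
    have := Polynomial.natDegree_modByMonic_lt (ε p) hQ fun h => by simp [h] at hQdeg
    omega
  refine ⟨ε.symm (ε p /ₘ Q), (ε p %ₘ Q).coeff 1, (ε p %ₘ Q).coeff 0, ε.injective ?_⟩
  have key := Polynomial.modByMonic_add_div (ε p) Q
  rw [Polynomial.eq_X_add_C_of_natDegree_le_one hr] at key
  simp only [map_add, map_mul, map_pow, finSuccEquiv_X_zero, finSuccEquiv_rename_succ,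
    AlgEquiv.apply_symm_apply, ε]
  linear_combination -key

noncomputable def sumSq : MvPolynomial (Fin 3) ℂ := X 0 ^ 2 + X 1 ^ 2 + X 2 ^ 2

lemma sumSq_isHomogeneous : sumSq.IsHomogeneous 2 :=
  ((isHomogeneous_X_pow _ _).add (isHomogeneous_X_pow _ _)).add (isHomogeneous_X_pow _ _)

lemma sumSq_ne_zero : sumSq ≠ 0 := by
  intro h
  have := congrArg (eval fun _ => (1 : ℂ)) h
  norm_num [sumSq] at this

lemma sumSq_eq_X_zero_sq_add_rename : sumSq = X 0 ^ 2 + rename Fin.succ (X 0 ^ 2 + X 1 ^ 2) := by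
  simp [sumSq, add_assoc]

lemma lapL_apply (f : MvPolynomial (Fin 3) ℂ) : lapL f = ∑ i, pderiv i (pderiv i f) := by
  simp [lapL]

lemma mem_harmonicPolySpace_iff {n : ℕ} {p : MvPolynomial (Fin 3) ℂ} :
    p ∈ harmonicPolySpace n ↔ p.IsHomogeneous n ∧ lapL p = 0 := by
  rw [harmonicPolySpace, Submodule.mem_inf, mem_homogeneousSubmodule, LinearMap.mem_ker]

lemma MvPolynomial.IsHomogeneous.lapL {n : ℕ} {p : MvPolynomial (Fin 3) ℂ}
    (hp : p.IsHomogeneous n) : (lapL p).IsHomogeneous (n - 2) := by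
  rw [lapL_apply]
  exact IsHomogeneous.sum _ _ _ fun i _ => by
    simpa [Nat.sub_sub] using (hp.pderiv (i := i)).pderiv (i := i)

lemma lapL_eq_zero_of_isHomogeneous_of_lt_two {n : ℕ} {p : MvPolynomial (Fin 3) ℂ}
    (hp : p.IsHomogeneous n) (hn : n < 2) : lapL p = 0 := by
  rw [lapL_apply]
  refine Finset.sum_eq_zero fun i _ => ?_
  have h0 : (pderiv i p).IsHomogeneous 0 := by simpa [show n - 1 = 0 by omega] using hp.pderiv
  rw [← totalDegree_zero_iff_isHomogeneous, totalDegree_eq_zero_iff_eq_C] at h0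
  rw [h0, pderiv_C]

lemma lapL_sumSq_mul (f : MvPolynomial (Fin 3) ℂ) :
    lapL (sumSq * f) = sumSq * lapL f + 4 * ∑ i, X i * pderiv i f + 6 * f := by
  have hq (i : Fin 3) : pderiv i sumSq = X i + X i := by
    fin_cases i <;> simp [sumSq, pderiv_X, two_mul]
  simp only [lapL_apply, Fin.sum_univ_three, pderiv_mul, hq, pderiv_X_self, map_add]
  ring

lemma lapL_sumSq_mul_of_isHomogeneous {m : ℕ} {f : MvPolynomial (Fin 3) ℂ}
    (hf : f.IsHomogeneous m) :
    lapL (sumSq * f) = sumSq * lapL f + (4 * m + 6) • f := by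
  rw [lapL_sumSq_mul, hf.sum_X_mul_pderiv, add_smul, mul_smul, nsmul_eq_mul, nsmul_eq_mul,
    nsmul_eq_mul]
  push_cast
  ring

lemma lapL_sumSq_pow_succ_mul {d : ℕ} {w : MvPolynomial (Fin 3) ℂ} (hw : w.IsHomogeneous d)
    (k : ℕ) : lapL (sumSq ^ (k + 1) * w) =
      sumSq ^ (k + 1) * lapL w + (2 * (k + 1) * (2 * d + 2 * k + 3)) • (sumSq ^ k * w) := by
  induction k with
  | zero =>
    rw [zero_add, pow_one, pow_zero, one_mul, lapL_sumSq_mul_of_isHomogeneous hw]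
    ring_nf
  | succ k ih =>
    have hdeg : (sumSq ^ (k + 1) * w).IsHomogeneous (2 * (k + 1) + d) :=
      (sumSq_isHomogeneous.pow _).mul hw
    rw [pow_succ', mul_assoc, lapL_sumSq_mul_of_isHomogeneous hdeg, ih]
    simp only [nsmul_eq_mul]
    push_cast
    ring

lemma eq_zero_of_lapL_sumSq_pow_succ_mul_eq_zero {d : ℕ} {w : MvPolynomial (Fin 3) ℂ}
    (hw : w.IsHomogeneous d) {k : ℕ} (h : lapL (sumSq ^ (k + 1) * w) = 0) : w = 0 := by
  induction d using Nat.strong_induction_on generalizing w k with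
  | _ d ih =>
  set c : ℕ := 2 * (k + 1) * (2 * d + 2 * k + 3)
  have hc : (c : ℂ) ≠ 0 := Nat.cast_ne_zero.mpr (by positivity)
  have hfactor : sumSq ^ k * (sumSq * lapL w + (c : ℂ) • w) = 0 := by
    rw [← h, lapL_sumSq_pow_succ_mul hw, mul_add, mul_smul_comm, Nat.cast_smul_eq_nsmul]
    ring
  have hw' := (mul_eq_zero.mp hfactor).resolve_left (pow_ne_zero _ sumSq_ne_zero)
  set g := -(c : ℂ)⁻¹ • lapL w
  have hwg : w = sumSq * g := by
    rw [← inv_smul_smul₀ hc w, eq_neg_of_add_eq_zero_right hw', mul_smul_comm, smul_neg,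
      neg_smul]
  have hg : g = 0 := by
    rcases lt_or_ge d 2 with hd | hd
    · simp [g, lapL_eq_zero_of_isHomogeneous_of_lt_two hw hd]
    · refine ih (d - 2) (by omega) ((homogeneousSubmodule _ ℂ _).smul_mem _ hw.lapL)
        (k := k + 1) ?_
      rwa [pow_succ, mul_assoc, ← hwg]
  rw [hwg, hg, mul_zero]

lemma eq_zero_of_mem_harmonicPolySpace_of_sumSq_dvd {n : ℕ} {h : MvPolynomial (Fin 3) ℂ}
    (hh : h ∈ harmonicPolySpace n) (hdvd : sumSq ∣ h) : h = 0 := by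
  obtain ⟨hhom, hlap⟩ := mem_harmonicPolySpace_iff.mp hh
  obtain ⟨G, rfl⟩ := hdvd
  obtain ⟨g, hg, hGg⟩ := sumSq_isHomogeneous.exists_isHomogeneous_mul_eq hhom
  rw [hGg] at hlap ⊢
  rw [eq_zero_of_lapL_sumSq_pow_succ_mul_eq_zero hg (k := 0) (by rwa [pow_one]), mul_zero]

lemma exists_isHomogeneous_lapL_sumSq_pow_succ_mul_eq {m : ℕ} {p : MvPolynomial (Fin 3) ℂ}
    (hp : p.IsHomogeneous m) (k : ℕ) :
    ∃ f : MvPolynomial (Fin 3) ℂ,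
      f.IsHomogeneous m ∧ lapL (sumSq ^ (k + 1) * f) = sumSq ^ k * p := by
  induction m using Nat.strong_induction_on generalizing p k with
  | _ m ih =>
  set c : ℕ := 2 * (k + 1) * (2 * m + 2 * k + 3)
  have hc : (c : ℂ) ≠ 0 := Nat.cast_ne_zero.mpr (by positivity)
  obtain ⟨f', hf', hlap'⟩ : ∃ f' : MvPolynomial (Fin 3) ℂ, (sumSq * f').IsHomogeneous m ∧
      lapL (sumSq ^ (k + 2) * f') = sumSq ^ (k + 1) * lapL p := by
    rcases lt_or_ge m 2 with hm | hm
    · exact ⟨0, by simpa using isHomogeneous_zero _ _ m,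
        by simp [lapL_eq_zero_of_isHomogeneous_of_lt_two hp hm]⟩
    · obtain ⟨f', hf', hlap'⟩ := ih (m - 2) (by omega) hp.lapL (k + 1)
      refine ⟨f', ?_, hlap'⟩
      simpa [show 2 + (m - 2) = m by omega] using sumSq_isHomogeneous.mul hf'
  refine ⟨(c : ℂ)⁻¹ • (p - sumSq * f'),
    (homogeneousSubmodule _ ℂ m).smul_mem _ (hp.sub hf'), ?_⟩
  rw [mul_smul_comm, map_smul, mul_sub, map_sub, ← mul_assoc, ← pow_succ, hlap',
    lapL_sumSq_pow_succ_mul hp, add_sub_cancel_left, ← Nat.cast_smul_eq_nsmul ℂ,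
    inv_smul_smul₀ hc]

lemma exists_mem_harmonicPolySpace_sumSq_dvd_sub {n : ℕ} {p : MvPolynomial (Fin 3) ℂ}
    (hp : p.IsHomogeneous n) : ∃ h ∈ harmonicPolySpace n, sumSq ∣ p - h := by
  rcases lt_or_ge n 2 with hn | hn
  · refine ⟨p, mem_harmonicPolySpace_iff.mpr ⟨hp, ?_⟩, by simp⟩
    exact lapL_eq_zero_of_isHomogeneous_of_lt_two hp hn
  obtain ⟨f, hf, hlap⟩ := exists_isHomogeneous_lapL_sumSq_pow_succ_mul_eq hp.lapL 0
  have hqf : (sumSq * f).IsHomogeneous n := by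
    simpa [show 2 + (n - 2) = n by omega] using sumSq_isHomogeneous.mul hf
  refine ⟨p - sumSq * f, mem_harmonicPolySpace_iff.mpr ⟨hp.sub hqf, ?_⟩, ⟨f, by ring⟩⟩
  rw [map_sub, ← pow_one sumSq, hlap, pow_zero, one_mul, sub_self]

lemma eval_cartanMapVec_sumSq (ξ : Fin 2 → ℂ) : eval (cartanMapVec ξ) sumSq = 0 := by
  simp only [sumSq, cartanMapVec, map_add, map_pow, eval_X, Matrix.cons_val_zero,
    Matrix.cons_val_one, Matrix.cons_val]
  field_simp
  linear_combination (ξ 0 ^ 2 + ξ 1 ^ 2) ^ 2 * I_sq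

lemma cartanMapVec_comp_swap (ξ : Fin 2 → ℂ) :
    cartanMapVec (ξ ∘ Equiv.swap 0 1) 0 = -cartanMapVec ξ 0 ∧
      cartanMapVec (ξ ∘ Equiv.swap 0 1) ∘ Fin.succ = cartanMapVec ξ ∘ Fin.succ := by
  refine ⟨by simp [cartanMapVec]; ring, funext fun i => ?_⟩
  fin_cases i <;> simp [cartanMapVec] <;> ring

lemma exists_cartanMapVec_comp_succ_eq (y : Fin 2 → ℂ) :
    ∃ ξ, cartanMapVec ξ ∘ Fin.succ = y := by
  obtain ⟨α, hα⟩ := IsAlgClosed.exists_eq_mul_self (2 * I * y 0 + 2 * y 1)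
  obtain ⟨β, hβ⟩ := IsAlgClosed.exists_eq_mul_self (2 * I * y 0 - 2 * y 1)
  refine ⟨![(α + β) / 2, (α - β) / 2], funext fun i => ?_⟩
  fin_cases i
  · simp only [cartanMapVec, Fin.isValue, Matrix.cons_val_zero, Matrix.cons_val_one,
      Matrix.cons_val_fin_one, Fin.zero_eta, Function.comp_apply, Fin.succ_zero_eq_one]
    field_simp
    linear_combination -2 * (hα + hβ)
  · simp only [cartanMapVec, Fin.isValue, Matrix.cons_val_zero, Matrix.cons_val_one,
      Matrix.cons_val_fin_one, Fin.mk_one, Function.comp_apply, Fin.succ_one_eq_two,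
      Matrix.cons_val]
    linear_combination -(hα - hβ) / 4

lemma sumSq_dvd_of_eval_cartanMapVec_eq_zero {p : MvPolynomial (Fin 3) ℂ}
    (hp : ∀ ξ, eval (cartanMapVec ξ) p = 0) : sumSq ∣ p := by
  obtain ⟨g, a, b, hgab⟩ := exists_eq_X_zero_sq_add_mul_add (X 0 ^ 2 + X 1 ^ 2) p
  rw [← sumSq_eq_X_zero_sq_add_rename] at hgab
  have hval (ξ : Fin 2 → ℂ) : cartanMapVec ξ 0 * eval (cartanMapVec ξ ∘ Fin.succ) a +
      eval (cartanMapVec ξ ∘ Fin.succ) b = 0 := by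
    simpa [hgab, eval_rename, eval_cartanMapVec_sumSq] using hp ξ
  have hodd (ξ : Fin 2 → ℂ) : cartanMapVec ξ 0 * eval (cartanMapVec ξ ∘ Fin.succ) a = 0 ∧
      eval (cartanMapVec ξ ∘ Fin.succ) b = 0 := by
    have h := hval (ξ ∘ Equiv.swap 0 1)
    rw [(cartanMapVec_comp_swap ξ).1, (cartanMapVec_comp_swap ξ).2] at h
    exact ⟨by linear_combination (hval ξ - h) / 2, by linear_combination (hval ξ + h) / 2⟩
  have hb : b = 0 := MvPolynomial.funext fun y => by
    obtain ⟨ξ, rfl⟩ := exists_cartanMapVec_comp_succ_eq y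
    simpa using (hodd ξ).2
  have ha : (X 0 ^ 2 + X 1 ^ 2) * a = 0 := MvPolynomial.funext fun y => by
    obtain ⟨ξ, rfl⟩ := exists_cartanMapVec_comp_succ_eq y
    have hq := eval_cartanMapVec_sumSq ξ
    simp only [sumSq, map_add, map_pow, eval_X] at hq
    simp only [map_mul, map_add, map_pow, eval_X, map_zero, Function.comp_apply,
      Fin.succ_zero_eq_one, Fin.succ_one_eq_two]
    linear_combination eval (cartanMapVec ξ ∘ Fin.succ) a * hq -
      cartanMapVec ξ 0 * (hodd ξ).1
  have hne : (X 0 ^ 2 + X 1 ^ 2 : MvPolynomial (Fin 2) ℂ) ≠ 0 := by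
    intro h
    simpa using congrArg (eval ![1, 0]) h
  refine ⟨g, ?_⟩
  rw [hgab, (mul_eq_zero.mp ha).resolve_left hne, hb]
  simp

noncomputable def cartanPoly : Fin 3 → MvPolynomial (Fin 2) ℂ :=
  ![C 2⁻¹ * (X 0 ^ 2 - X 1 ^ 2), C (2 * I)⁻¹ * (X 0 ^ 2 + X 1 ^ 2), X 0 * X 1]

lemma eval_aeval_cartanPoly (ξ : Fin 2 → ℂ) (p : MvPolynomial (Fin 3) ℂ) :
    eval ξ (aeval cartanPoly p) = eval (cartanMapVec ξ) p := by
  rw [aeval_eq_bind₁, eval, eval₂Hom_bind₁, eval]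
  congr 2
  funext i
  fin_cases i <;> simp [cartanPoly, cartanMapVec, div_eq_mul_inv, mul_comm]

lemma cartanPoly_isHomogeneous (i : Fin 3) : (cartanPoly i).IsHomogeneous 2 := by
  fin_cases i
  · exact ((isHomogeneous_X_pow _ _).sub (isHomogeneous_X_pow _ _)).C_mul _
  · exact ((isHomogeneous_X_pow _ _).add (isHomogeneous_X_pow _ _)).C_mul _
  · exact (isHomogeneous_X _ _).mul (isHomogeneous_X _ _)

lemma aeval_cartanPoly_sumSq : aeval cartanPoly sumSq = 0 :=
  MvPolynomial.funext fun ξ => by rw [eval_aeval_cartanPoly, eval_cartanMapVec_sumSq, map_zero]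

noncomputable def nullMonomial (i j k : ℕ) : MvPolynomial (Fin 3) ℂ :=
  (X 0 + C I * X 1) ^ i * (C I * X 1 - X 0) ^ j * X 2 ^ k

lemma nullMonomial_isHomogeneous (i j k : ℕ) :
    (nullMonomial i j k).IsHomogeneous (i + j + k) := by
  have hζ : (X 0 + C I * X 1 : MvPolynomial (Fin 3) ℂ).IsHomogeneous 1 :=
    (isHomogeneous_X _ _).add (isHomogeneous_C_mul_X _ _)
  have hη : (C I * X 1 - X 0 : MvPolynomial (Fin 3) ℂ).IsHomogeneous 1 :=
    (isHomogeneous_C_mul_X _ _).sub (isHomogeneous_X _ _)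
  simpa [nullMonomial] using ((hζ.pow i).mul (hη.pow j)).mul (isHomogeneous_X_pow 2 k)

lemma aeval_cartanPoly_nullMonomial (i j k : ℕ) :
    aeval cartanPoly (nullMonomial i j k) = X 0 ^ (2 * i + k) * X 1 ^ (2 * j + k) := by
  have hζ : aeval cartanPoly (X 0 + C I * X 1) = (X 0 ^ 2 : MvPolynomial (Fin 2) ℂ) :=
    MvPolynomial.funext fun ξ => by
      simp only [eval_aeval_cartanPoly, cartanMapVec, map_add, map_mul, map_pow, eval_C, eval_X,
        Matrix.cons_val_zero, Matrix.cons_val_one]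
      field_simp
      ring
  have hη : aeval cartanPoly (C I * X 1 - X 0) = (X 1 ^ 2 : MvPolynomial (Fin 2) ℂ) :=
    MvPolynomial.funext fun ξ => by
      simp only [eval_aeval_cartanPoly, cartanMapVec, map_sub, map_mul, map_pow, eval_C, eval_X,
        Matrix.cons_val_zero, Matrix.cons_val_one]
      field_simp
      ring
  have hz : aeval cartanPoly (X 2 : MvPolynomial (Fin 3) ℂ) = X 0 * X 1 := by
    simp [cartanPoly]
  rw [nullMonomial, map_mul, map_mul, map_pow, map_pow, map_pow, hζ, hη, hz]
  ring

lemma homogeneousSubmodule_le_map_aeval_cartanPoly (n : ℕ) :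
    homogeneousSubmodule (Fin 2) ℂ (2 * n) ≤
      (homogeneousSubmodule (Fin 3) ℂ n).map (aeval cartanPoly).toLinearMap := by
  rw [homogeneousSubmodule_eq_finsupp_supported, AddMonoidAlgebra.supported_eq_span_single,
    Submodule.span_le]
  rintro _ ⟨d, hd, rfl⟩
  rw [Set.mem_ofPred_eq, Finsupp.degree_eq_sum, Fin.sum_univ_two] at hd
  -- `u ^ a * v ^ b` is the image of `(x + iy) ^ i * (iy - x) ^ j * z ^ min a b`.
  obtain ⟨k, hk⟩ : ∃ k, k = min (d 0) (d 1) := ⟨_, rfl⟩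
  have hmon := nullMonomial_isHomogeneous ((d 0 - k) / 2) ((d 1 - k) / 2) k
  rw [show (d 0 - k) / 2 + (d 1 - k) / 2 + k = n by omega] at hmon
  refine ⟨_, hmon, ?_⟩
  rw [AlgHom.toLinearMap_apply, aeval_cartanPoly_nullMonomial,
    show 2 * ((d 0 - k) / 2) + k = d 0 by omega,
    show 2 * ((d 1 - k) / 2) + k = d 1 by omega]
  change _ = monomial d 1
  rw [monomial_eq, C_1, one_mul,
    Finsupp.prod_fintype _ _ fun _ => pow_zero _, Fin.prod_univ_two]

noncomputable def cartanPullback (n : ℕ) :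
    harmonicPolySpace n →ₗ[ℂ] homogeneousSubmodule (Fin 2) ℂ (2 * n) :=
  (aeval cartanPoly).toLinearMap.restrict fun _ hp =>
    (mem_harmonicPolySpace_iff.mp hp).1.aeval cartanPoly cartanPoly_isHomogeneous

lemma cartanPullback_injective (n : ℕ) : Function.Injective (cartanPullback n) := by
  refine (injective_iff_map_eq_zero _).mpr fun h hh => Subtype.ext ?_
  refine eq_zero_of_mem_harmonicPolySpace_of_sumSq_dvd h.2
    (sumSq_dvd_of_eval_cartanMapVec_eq_zero fun ξ => ?_)
  rw [← eval_aeval_cartanPoly, show aeval cartanPoly (h : MvPolynomial (Fin 3) ℂ) = 0 from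
    congrArg Subtype.val hh, map_zero]

lemma cartanPullback_surjective (n : ℕ) : Function.Surjective (cartanPullback n) := by
  rintro ⟨p, hp⟩
  obtain ⟨P, hP, rfl⟩ := homogeneousSubmodule_le_map_aeval_cartanPoly n hp
  obtain ⟨h, hh, g, hg⟩ := exists_mem_harmonicPolySpace_sumSq_dvd_sub hP
  refine ⟨⟨h, hh⟩, Subtype.ext ?_⟩
  change aeval cartanPoly h = aeval cartanPoly P
  rw [← sub_eq_zero, ← map_sub, ← neg_sub, hg, map_neg, map_mul, aeval_cartanPoly_sumSq,
    zero_mul, neg_zero]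

/-- The pullback by the Cartan map, `(φ*h)(u,v) = h((u²−v²)/2, (u²+v²)/(2i), uv)`, is a
`ℂ`-linear isomorphism from `H_n(ℂ³)` onto the space `S_{2n}` of binary forms of degree
`2n`. -/
theorem cartan_pullback_equiv (n : ℕ) :
    ∃ e : harmonicPolySpace n ≃ₗ[ℂ] MvPolynomial.homogeneousSubmodule (Fin 2) ℂ (2 * n),
      ∀ (h : harmonicPolySpace n) (ξ : Fin 2 → ℂ),
        MvPolynomial.eval ξ ((e h : MvPolynomial (Fin 2) ℂ)) =
          MvPolynomial.eval (cartanMapVec ξ) (h : MvPolynomial (Fin 3) ℂ) :=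
  ⟨.ofBijective (cartanPullback n) ⟨cartanPullback_injective n, cartanPullback_surjective n⟩,
    fun h ξ => eval_aeval_cartanPoly ξ h⟩
end
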